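/- Let A and B be nearly convex subsets of a Euclidean space X. Then the following are equivalent: (i) A ≈ B; (ii) closure A = closure B; (iii) the relative interior of A equals the relative interior of B; (iv) closure of conv A equals closure of conv B; (v) relative interior of conv A equals relative interior of conv B. -/

import Mathlib

/-!
The relative interior and the closure of a convex set `C` determine each other:
`ri (cl C) = ri C` and `cl (ri C) = cl C`. Inside the affine span of `C` these are the classical
facts about convex sets with nonempty interior. If `C ⊆ A ⊆ cl C`, then `A` and `conv A` have
the same closure, affine span and relative interior as `C`. Hence for nearly convex `A` the sets
`cl A`, `ri A`, `cl (conv A)` and `ri (conv A)` all determine one another.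
-/

variable {X : Type*} [NormedAddCommGroup X] [InnerProductSpace ℝ X] [FiniteDimensional ℝ X]

def NearlyEqual (A B : Set X) : Prop :=
  closure A = closure B ∧ intrinsicInterior ℝ A = intrinsicInterior ℝ B

def NearlyConvex (A : Set X) : Prop :=
  ∃ C : Set X, Convex ℝ C ∧ C ⊆ A ∧ A ⊆ closure C

open Set Topology

attribute [local instance] AffineSubspace.toNormedAddTorsor

theorem closure_eq_of_subset_of_subset_closure {α : Type*} [TopologicalSpace α] {s t : Set α}
    (hst : s ⊆ t) (hts : t ⊆ closure s) : closure t = closure s :=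
  subset_antisymm (closure_minimal hts isClosed_closure) (closure_mono hst)

section IntrinsicInterior

variable {V : Type*} [NormedAddCommGroup V] [NormedSpace ℝ V]

theorem intrinsicInterior_mono_of_affineSpan_eq {s t : Set V}
    (h : affineSpan ℝ s = affineSpan ℝ t) (hst : s ⊆ t) :
    intrinsicInterior ℝ s ⊆ intrinsicInterior ℝ t := by
  rw [intrinsicInterior, intrinsicInterior, h]
  exact image_mono (interior_mono (preimage_mono hst))

theorem closure_coe_preimage_affineSpan (s : Set V) :
    closure ((↑) ⁻¹' s : Set (affineSpan ℝ s)) = (↑) ⁻¹' closure s := by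
  rw [IsEmbedding.subtypeVal.closure_eq_preimage_closure_image, image_preimage_eq_of_subset]
  rw [Subtype.range_coe]
  exact subset_affineSpan ℝ s

variable [FiniteDimensional ℝ V]

theorem affineSpan_closure (s : Set V) : affineSpan ℝ (closure s) = affineSpan ℝ s :=
  le_antisymm
    (affineSpan_le.2 (closure_minimal (subset_affineSpan ℝ s)
      (affineSpan ℝ s).closed_of_finiteDimensional))
    (affineSpan_mono ℝ subset_closure)

theorem affineSpan_eq_of_subset_of_subset_closure {s t : Set V} (hst : s ⊆ t)
    (hts : t ⊆ closure s) : affineSpan ℝ t = affineSpan ℝ s :=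
  le_antisymm ((affineSpan_mono ℝ hts).trans_eq (affineSpan_closure s)) (affineSpan_mono ℝ hst)

/-- Translating a base point to the origin turns `s` into a convex body in the direction of its
affine span. -/
theorem Convex.exists_homeomorph_direction_affineSpan {s : Set V} (hs : Convex ℝ s)
    (hne : s.Nonempty) :
    ∃ f : (affineSpan ℝ s).direction ≃ₜ affineSpan ℝ s,
      Convex ℝ (f ⁻¹' ((↑) ⁻¹' s)) ∧ (interior (f ⁻¹' ((↑) ⁻¹' s))).Nonempty := by
  have := hne.to_subtype
  obtain ⟨p, hp⟩ := hne
  let e := (AffineIsometryEquiv.constVSub ℝ (⟨p, subset_affineSpan ℝ s hp⟩ : affineSpan ℝ s)).symm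
  refine ⟨e.toHomeomorph,
    hs.affine_preimage ((affineSpan ℝ s).subtype.comp e.toAffineEquiv.toAffineMap), ?_⟩
  rw [← e.toHomeomorph.preimage_interior]
  refine Nonempty.preimage ?_ e.toHomeomorph.surjective
  simpa only [intrinsicInterior, image_nonempty] using Set.Nonempty.intrinsicInterior hs ⟨p, hp⟩

theorem Convex.interior_closure_coe_preimage_affineSpan {s : Set V} (hs : Convex ℝ s) :
    interior (closure ((↑) ⁻¹' s : Set (affineSpan ℝ s))) = interior ((↑) ⁻¹' s) := by
  rcases s.eq_empty_or_nonempty with rfl | hne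
  · simp
  obtain ⟨f, hconv, hint⟩ := hs.exists_homeomorph_direction_affineSpan hne
  apply f.surjective.preimage_injective
  rw [f.preimage_interior, f.preimage_closure,
    hconv.interior_closure_eq_interior_of_nonempty_interior hint, f.preimage_interior]

theorem Convex.closure_interior_coe_preimage_affineSpan {s : Set V} (hs : Convex ℝ s) :
    closure (interior ((↑) ⁻¹' s : Set (affineSpan ℝ s))) = closure ((↑) ⁻¹' s) := by
  rcases s.eq_empty_or_nonempty with rfl | hne
  · simp
  obtain ⟨f, hconv, hint⟩ := hs.exists_homeomorph_direction_affineSpan hne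
  apply f.surjective.preimage_injective
  rw [f.preimage_closure, f.preimage_interior,
    hconv.closure_interior_eq_closure_of_nonempty_interior hint, f.preimage_closure]

theorem Convex.intrinsicInterior_closure {s : Set V} (hs : Convex ℝ s) :
    intrinsicInterior ℝ (closure s) = intrinsicInterior ℝ s := by
  rw [intrinsicInterior, intrinsicInterior, affineSpan_closure, ← closure_coe_preimage_affineSpan,
    hs.interior_closure_coe_preimage_affineSpan]

theorem Convex.closure_intrinsicInterior {s : Set V} (hs : Convex ℝ s) :
    closure (intrinsicInterior ℝ s) = closure s := by
  have hemb : IsClosedEmbedding ((↑) : affineSpan ℝ s → V) :=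
    (affineSpan ℝ s).closed_of_finiteDimensional.isClosedEmbedding_subtypeVal
  rw [intrinsicInterior, hemb.closure_image_eq, hs.closure_interior_coe_preimage_affineSpan,
    ← hemb.closure_image_eq, image_preimage_eq_of_subset]
  rw [Subtype.range_coe]
  exact subset_affineSpan ℝ s

theorem Convex.intrinsicInterior_eq_of_subset_of_subset_closure {s t : Set V} (hs : Convex ℝ s)
    (hst : s ⊆ t) (hts : t ⊆ closure s) : intrinsicInterior ℝ t = intrinsicInterior ℝ s := by
  have hspan := affineSpan_eq_of_subset_of_subset_closure hst hts
  refine subset_antisymm ?_ (intrinsicInterior_mono_of_affineSpan_eq hspan.symm hst)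
  calc intrinsicInterior ℝ t
      ⊆ intrinsicInterior ℝ (closure s) :=
        intrinsicInterior_mono_of_affineSpan_eq (by rw [hspan, affineSpan_closure]) hts
    _ = intrinsicInterior ℝ s := hs.intrinsicInterior_closure

end IntrinsicInterior

namespace NearlyConvex

variable {A : Set X}

omit [FiniteDimensional ℝ X] in
theorem closure_convexHull (hA : NearlyConvex A) : closure (convexHull ℝ A) = closure A := by
  obtain ⟨C, hC, hCA, hAC⟩ := hA
  rw [closure_eq_of_subset_of_subset_closure (hCA.trans (subset_convexHull ℝ A))
      (convexHull_min hAC hC.closure), closure_eq_of_subset_of_subset_closure hCA hAC]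

theorem intrinsicInterior_convexHull (hA : NearlyConvex A) :
    intrinsicInterior ℝ (convexHull ℝ A) = intrinsicInterior ℝ A := by
  obtain ⟨C, hC, hCA, hAC⟩ := hA
  rw [hC.intrinsicInterior_eq_of_subset_of_subset_closure (hCA.trans (subset_convexHull ℝ A))
      (convexHull_min hAC hC.closure), hC.intrinsicInterior_eq_of_subset_of_subset_closure hCA hAC]

theorem intrinsicInterior_closure (hA : NearlyConvex A) :
    intrinsicInterior ℝ (closure A) = intrinsicInterior ℝ A := by
  obtain ⟨C, hC, hCA, hAC⟩ := hA
  rw [closure_eq_of_subset_of_subset_closure hCA hAC, hC.intrinsicInterior_closure,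
    hC.intrinsicInterior_eq_of_subset_of_subset_closure hCA hAC]

theorem closure_intrinsicInterior (hA : NearlyConvex A) :
    closure (intrinsicInterior ℝ A) = closure A := by
  obtain ⟨C, hC, hCA, hAC⟩ := hA
  rw [hC.intrinsicInterior_eq_of_subset_of_subset_closure hCA hAC, hC.closure_intrinsicInterior,
    closure_eq_of_subset_of_subset_closure hCA hAC]

end NearlyConvex

theorem nearlyEqual_tfae (A B : Set X) (hA : NearlyConvex A) (hB : NearlyConvex B) :
    [NearlyEqual A B,
     closure A = closure B,
     intrinsicInterior ℝ A = intrinsicInterior ℝ B,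
     closure (convexHull ℝ A) = closure (convexHull ℝ B),
     intrinsicInterior ℝ (convexHull ℝ A) = intrinsicInterior ℝ (convexHull ℝ B)].TFAE := by
  have closure_iff : closure A = closure B ↔ intrinsicInterior ℝ A = intrinsicInterior ℝ B :=
    ⟨fun h ↦ by rw [← hA.intrinsicInterior_closure, h, hB.intrinsicInterior_closure],
     fun h ↦ by rw [← hA.closure_intrinsicInterior, h, hB.closure_intrinsicInterior]⟩
  tfae_have 1 ↔ 2 := ⟨And.left, fun h ↦ ⟨h, closure_iff.1 h⟩⟩
  tfae_have 2 ↔ 3 := closure_iff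
  tfae_have 2 ↔ 4 := by rw [hA.closure_convexHull, hB.closure_convexHull]
  tfae_have 3 ↔ 5 := by rw [hA.intrinsicInterior_convexHull, hB.intrinsicInterior_convexHull]
  tfae_finish
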